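/- Let f₁ : U₁ → V₁, f₂ : U₂ → V₂ and f₃ : U₂ → V₁ be linear maps of finite-dimensional real inner product spaces such that f₁ is surjective and f₂ is injective. Then the block map U₁ ⊕ U₂ → V₁ ⊕ V₂ given by the matrix (f₁ f₃ ; 0 f₂), i.e. sending (u₁,u₂) to (f₁(u₁)+f₃(u₂), f₂(u₂)), satisfies det⊥((f₁ f₃ ; 0 f₂)) = det⊥(f₁) · det⊥(f₂). -/

import Mathlib

/-!
Restricted to `(ker f)ᗮ`, the map `f` is injective and `detPerp f` is the `normDet` of the
restriction, i.e. `|det M|` for the matrix `M` of `f` from any orthonormal basis of `(ker f)ᗮ` to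
any orthonormal basis of `range f`: the Gram matrix of the images of the basis is `Mᵀ M`.
For the block map `F`, injectivity of `f₂` gives `ker F = ker f₁ × 0`, so orthonormal bases of
`(ker f₁)ᗮ` and of `U₂` together form one of `(ker F)ᗮ`, and surjectivity of `f₁` lets `f₃` be
expanded in the basis of `range f₁`. In these bases `F` has the block upper triangular matrix
`(M₁ M₃; 0 M₂)`, whose determinant is `det M₁ * det M₂`.
-/

/-- `det⊥(f)`: for a linear map `f : V → W` of finite-dimensional real inner product
spaces, `detPerp f = 1` if `f = 0`, and otherwise it is the square root of the determinant
of the endomorphism of the orthogonal complement of `ker (f* ∘ f)` induced by `f* ∘ f`. -/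
noncomputable def detPerp {V W : Type*} [NormedAddCommGroup V] [InnerProductSpace ℝ V]
    [NormedAddCommGroup W] [InnerProductSpace ℝ W]
    [FiniteDimensional ℝ V] [FiniteDimensional ℝ W] (f : V →ₗ[ℝ] W) : ℝ :=
  letI := Classical.propDecidable (f = 0)
  if f = 0 then 1
  else Real.sqrt (LinearMap.det
    ((Submodule.orthogonalProjectionOnto (LinearMap.ker (LinearMap.adjoint f ∘ₗ f))ᗮ).toLinearMap
      ∘ₗ (LinearMap.adjoint f ∘ₗ f)
      ∘ₗ (LinearMap.ker (LinearMap.adjoint f ∘ₗ f))ᗮ.subtype))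

open Module
open LinearMap (ker range)
open scoped InnerProductSpace RealInnerProductSpace Matrix

section Orthonormal

variable {𝕜 E F : Type*} [RCLike 𝕜] [NormedAddCommGroup E] [InnerProductSpace 𝕜 E]
  [NormedAddCommGroup F] [InnerProductSpace 𝕜 F]

theorem Matrix.gram_sum_smul_of_orthonormal {ι κ : Type*} [Fintype κ] {c : κ → E}
    (hc : Orthonormal 𝕜 c) (M : Matrix κ ι 𝕜) :
    Matrix.gram 𝕜 (fun j ↦ ∑ k, M k j • c k) = Mᴴ * M := by
  ext i j
  simp [Matrix.gram_apply, hc.inner_sum, Matrix.mul_apply]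

theorem Orthonormal.sumElim_toLp {ι₁ ι₂ : Type*} {v : ι₁ → E} {w : ι₂ → F}
    (hv : Orthonormal 𝕜 v) (hw : Orthonormal 𝕜 w) :
    Orthonormal 𝕜 (Sum.elim (fun i ↦ WithLp.toLp 2 (v i, 0)) (fun j ↦ WithLp.toLp 2 (0, w j))) := by
  classical
  rw [orthonormal_iff_ite] at hv hw ⊢
  rintro (i | i) (j | j) <;> simp [hv, hw]

theorem OrthonormalBasis.sum_inner_smul_coe {ι : Type*} [Fintype ι] {K : Submodule 𝕜 E}
    (c : OrthonormalBasis ι 𝕜 K) {x : E} (hx : x ∈ K) :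
    ∑ k, ⟪(c k : E), x⟫_𝕜 • (c k : E) = x := by
  simpa using congrArg Subtype.val (c.sum_repr' ⟨x, hx⟩)

end Orthonormal

section DetPerp

variable {V W : Type*} [NormedAddCommGroup V] [InnerProductSpace ℝ V]
  [NormedAddCommGroup W] [InnerProductSpace ℝ W]

theorem Submodule.adjoint_subtype [FiniteDimensional ℝ V] (K : Submodule ℝ V) :
    LinearMap.adjoint K.subtype = K.orthogonalProjectionOnto.toLinearMap :=
  ((LinearMap.eq_adjoint_iff _ _).mpr fun _ _ ↦ by simp).symm

theorem Orthonormal.exists_orthonormalBasis_of_mem {ι : Type*} [Fintype ι] {K : Submodule ℝ V}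
    [FiniteDimensional ℝ K] {v : ι → V} (hv : Orthonormal ℝ v) (hmem : ∀ i, v i ∈ K)
    (hcard : Fintype.card ι = finrank ℝ K) :
    ∃ b : OrthonormalBasis ι ℝ K, ∀ i, (b i : V) = v i := by
  let v' : ι → K := fun i ↦ ⟨v i, hmem i⟩
  have hv' : Orthonormal ℝ v' := ⟨fun i ↦ hv.1 i, fun _ _ h ↦ hv.2 h⟩
  have hspan : ⊤ ≤ Submodule.span ℝ (Set.range v') :=
    (hv'.linearIndependent.span_eq_top_of_card_eq_finrank' (by simpa using hcard)).ge
  exact ⟨OrthonormalBasis.mk hv' hspan, fun i ↦ by rw [OrthonormalBasis.coe_mk]⟩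

theorem LinearMap.normDet_eq_abs_det_of_orthonormal {ι : Type*} [Fintype ι] [DecidableEq ι]
    [FiniteDimensional ℝ V] (g : V →ₗ[ℝ] W) (b : OrthonormalBasis ι ℝ V) {c : ι → W}
    (hc : Orthonormal ℝ c) (M : Matrix ι ι ℝ) (hM : ∀ j, g (b j) = ∑ k, M k j • c k) :
    g.normDet = |M.det| := by
  have hsq := g.normDet_sq_eq_det_gram b
  simp only [hM, Matrix.gram_sum_smul_of_orthonormal hc, Matrix.det_mul, Matrix.det_conjTranspose,
    star_trivial, RCLike.ofReal_real_eq_id, id_eq, ← sq] at hsq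
  rwa [← sq_eq_sq₀ g.normDet_nonneg (abs_nonneg _), sq_abs]

variable [FiniteDimensional ℝ V] [FiniteDimensional ℝ W]

theorem LinearMap.finrank_orthogonal_ker (f : V →ₗ[ℝ] W) :
    finrank ℝ (ker f)ᗮ = finrank ℝ (range f) := by
  rw [orthogonal_ker, finrank_range_adjoint]

-- `ker (f* ∘ f)` rather than `ker f`: it occurs in types inside `detPerp`, where `rw` fails.
theorem detPerp_eq_normDet (f : V →ₗ[ℝ] W) :
    detPerp f = (f ∘ₗ (ker (LinearMap.adjoint f ∘ₗ f))ᗮ.subtype).normDet := by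
  unfold detPerp
  split_ifs with hf
  · subst hf
    have : Subsingleton
        (ker (LinearMap.adjoint (0 : V →ₗ[ℝ] W) ∘ₗ (0 : V →ₗ[ℝ] W)))ᗮ := by
      rw [LinearMap.ker_adjoint_comp_self, LinearMap.ker_zero, Submodule.top_orthogonal_eq_bot]
      infer_instance
    simp
  · have hsq := LinearMap.normDet_sq (f ∘ₗ (ker (LinearMap.adjoint f ∘ₗ f))ᗮ.subtype)
    rw [LinearMap.adjoint_comp, Submodule.adjoint_subtype] at hsq
    rw [← Real.sqrt_sq (LinearMap.normDet_nonneg _)]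
    simpa [LinearMap.comp_assoc] using congrArg Real.sqrt hsq.symm

theorem detPerp_eq_abs_det {ι : Type*} [Fintype ι] [DecidableEq ι] (f : V →ₗ[ℝ] W)
    {b : ι → V} {c : ι → W} (hb : Orthonormal ℝ b) (hb_mem : ∀ i, b i ∈ (ker f)ᗮ)
    (hcard : Fintype.card ι = finrank ℝ (ker f)ᗮ) (hc : Orthonormal ℝ c)
    (M : Matrix ι ι ℝ) (hM : ∀ j, f (b j) = ∑ k, M k j • c k) :
    detPerp f = |M.det| := by
  rw [← LinearMap.ker_adjoint_comp_self] at hb_mem hcard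
  obtain ⟨β, hβ⟩ := hb.exists_orthonormalBasis_of_mem hb_mem hcard
  rw [detPerp_eq_normDet]
  exact LinearMap.normDet_eq_abs_det_of_orthonormal _ β hc M fun j ↦ by simp [hβ, hM]

theorem detPerp_eq_abs_det_inner {ι : Type*} [Fintype ι] [DecidableEq ι] (f : V →ₗ[ℝ] W)
    (b : OrthonormalBasis ι ℝ (ker f)ᗮ) (c : OrthonormalBasis ι ℝ (range f)) :
    detPerp f = |(Matrix.of fun k j ↦ ⟪(c k : W), f (b j)⟫).det| := by
  refine detPerp_eq_abs_det f (b.orthonormal.comp_linearIsometry (Submodule.subtypeₗᵢ _))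
    (fun i ↦ (b i).2) (finrank_eq_card_basis b.toBasis).symm
    (c.orthonormal.comp_linearIsometry (Submodule.subtypeₗᵢ _)) _
    fun j ↦ (c.sum_inner_smul_coe (LinearMap.mem_range_self f _)).symm

end DetPerp

section BlockMap

variable {R U₁ U₂ V₁ V₂ : Type*} [Semiring R]
  [AddCommGroup U₁] [Module R U₁] [AddCommGroup U₂] [Module R U₂]
  [AddCommGroup V₁] [Module R V₁] [AddCommGroup V₂] [Module R V₂]

theorem sum_smul_sumElim_toLp {ι₁ ι₂ : Type*} [Fintype ι₁] [Fintype ι₂] (a : ι₁ ⊕ ι₂ → R)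
    (v : ι₁ → V₁) (w : ι₂ → V₂) :
    ∑ t, a t • Sum.elim (fun i ↦ WithLp.toLp 2 (v i, 0)) (fun j ↦ WithLp.toLp 2 (0, w j)) t =
      WithLp.toLp 2 (∑ i, a (.inl i) • v i, ∑ j, a (.inr j) • w j) := by
  rw [Fintype.sum_sum_type]
  apply WithLp.ofLp_injective 2
  ext <;> simp [Prod.fst_sum, Prod.snd_sum]

def blockMap (f₁ : U₁ →ₗ[R] V₁) (f₂ : U₂ →ₗ[R] V₂) (f₃ : U₂ →ₗ[R] V₁) :
    WithLp 2 (U₁ × U₂) →ₗ[R] WithLp 2 (V₁ × V₂) :=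
  LinearMap.withLpMap 2 ((f₁.coprod f₃).prod (f₂ ∘ₗ LinearMap.snd R U₁ U₂))

variable (f₁ : U₁ →ₗ[R] V₁) (f₂ : U₂ →ₗ[R] V₂) (f₃ : U₂ →ₗ[R] V₁)

theorem blockMap_apply (u : WithLp 2 (U₁ × U₂)) :
    blockMap f₁ f₂ f₃ u = WithLp.toLp 2 (f₁ u.fst + f₃ u.snd, f₂ u.snd) := rfl

theorem ker_blockMap (h₂ : Function.Injective f₂) :
    ker (blockMap f₁ f₂ f₃) = (ker f₁).map
      ((WithLp.linearEquiv 2 R (U₁ × U₂)).symm.toLinearMap ∘ₗ LinearMap.inl R U₁ U₂) := by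
  ext u
  simp only [LinearMap.mem_ker, blockMap_apply, WithLp.toLp_eq_zero, Prod.mk_eq_zero,
    Submodule.mem_map, LinearMap.coe_comp, LinearEquiv.coe_coe, Function.comp_apply,
    LinearMap.inl_apply, WithLp.coe_symm_linearEquiv]
  constructor
  · rintro ⟨h_fst, h_snd⟩
    have hsnd : u.snd = 0 := h₂ (by rw [h_snd, map_zero])
    refine ⟨u.fst, by simpa [hsnd] using h_fst, ?_⟩
    rw [← hsnd]
    rfl
  · rintro ⟨x, hx, rfl⟩
    simp [hx]

theorem blockMap_sumElim {ι₁ ι₂ κ₁ κ₂ : Type*} [Fintype κ₁] [Fintype κ₂]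
    {b₁ : ι₁ → U₁} {b₂ : ι₂ → U₂} {c₁ : κ₁ → V₁} {c₂ : κ₂ → V₂}
    {M₁ : Matrix κ₁ ι₁ R} {M₂ : Matrix κ₂ ι₂ R} {M₃ : Matrix κ₁ ι₂ R}
    (hM₁ : ∀ j, f₁ (b₁ j) = ∑ k, M₁ k j • c₁ k) (hM₂ : ∀ j, f₂ (b₂ j) = ∑ k, M₂ k j • c₂ k)
    (hM₃ : ∀ j, f₃ (b₂ j) = ∑ k, M₃ k j • c₁ k) (s : ι₁ ⊕ ι₂) :
    blockMap f₁ f₂ f₃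
        (Sum.elim (fun i ↦ WithLp.toLp 2 (b₁ i, 0)) (fun j ↦ WithLp.toLp 2 (0, b₂ j)) s) =
      ∑ t, Matrix.fromBlocks M₁ M₃ 0 M₂ t s •
          Sum.elim (fun k ↦ WithLp.toLp 2 (c₁ k, 0)) (fun k ↦ WithLp.toLp 2 (0, c₂ k)) t := by
  rw [sum_smul_sumElim_toLp]
  rcases s with i | j <;> simp [blockMap_apply, hM₁, hM₂, hM₃]

end BlockMap

section DetPerpBlockMap

variable {U₁ U₂ V₁ V₂ : Type*}
  [NormedAddCommGroup U₁] [InnerProductSpace ℝ U₁] [NormedAddCommGroup U₂] [InnerProductSpace ℝ U₂]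
  [NormedAddCommGroup V₁] [InnerProductSpace ℝ V₁] [NormedAddCommGroup V₂] [InnerProductSpace ℝ V₂]
  (f₁ : U₁ →ₗ[ℝ] V₁) (f₂ : U₂ →ₗ[ℝ] V₂) (f₃ : U₂ →ₗ[ℝ] V₁)

theorem finrank_orthogonal_ker_blockMap [FiniteDimensional ℝ U₁] [FiniteDimensional ℝ U₂]
    (h₂ : Function.Injective f₂) :
    finrank ℝ (ker (blockMap f₁ f₂ f₃))ᗮ = finrank ℝ (ker f₁)ᗮ + finrank ℝ U₂ := by
  have hker : finrank ℝ (ker (blockMap f₁ f₂ f₃)) = finrank ℝ (ker f₁) := by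
    rw [ker_blockMap f₁ f₂ f₃ h₂]
    exact (LinearEquiv.finrank_eq (Submodule.equivMapOfInjective _
      (fun x y h ↦ by simpa using h) _)).symm
  have hsum := (ker (blockMap f₁ f₂ f₃)).finrank_add_finrank_orthogonal
  have hsum₁ := (ker f₁).finrank_add_finrank_orthogonal
  rw [LinearEquiv.finrank_eq (WithLp.linearEquiv 2 ℝ (U₁ × U₂)), finrank_prod] at hsum
  omega

theorem toLp_inl_mem_orthogonal_ker_blockMap (h₂ : Function.Injective f₂) {x : U₁}
    (hx : x ∈ (ker f₁)ᗮ) :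
    WithLp.toLp 2 (x, 0) ∈ (ker (blockMap f₁ f₂ f₃))ᗮ := by
  rw [ker_blockMap f₁ f₂ f₃ h₂, Submodule.mem_orthogonal]
  rintro _ ⟨k, hk, rfl⟩
  simpa using (Submodule.mem_orthogonal _ _).mp hx k hk

theorem toLp_inr_mem_orthogonal_ker_blockMap (h₂ : Function.Injective f₂) (y : U₂) :
    WithLp.toLp 2 (0, y) ∈ (ker (blockMap f₁ f₂ f₃))ᗮ := by
  rw [ker_blockMap f₁ f₂ f₃ h₂, Submodule.mem_orthogonal]
  rintro _ ⟨k, -, rfl⟩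
  simp

theorem detPerp_blockMap [FiniteDimensional ℝ U₁] [FiniteDimensional ℝ U₂]
    [FiniteDimensional ℝ V₁] [FiniteDimensional ℝ V₂]
    (h₁ : Function.Surjective f₁) (h₂ : Function.Injective f₂)
    {ι₁ ι₂ : Type*} [Fintype ι₁] [DecidableEq ι₁] [Fintype ι₂] [DecidableEq ι₂]
    (b₁ : OrthonormalBasis ι₁ ℝ (ker f₁)ᗮ) (c₁ : OrthonormalBasis ι₁ ℝ (range f₁))
    (b₂ : OrthonormalBasis ι₂ ℝ (ker f₂)ᗮ) (c₂ : OrthonormalBasis ι₂ ℝ (range f₂)) :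
    detPerp (blockMap f₁ f₂ f₃) = |(Matrix.fromBlocks
      (Matrix.of fun k j ↦ ⟪(c₁ k : V₁), f₁ (b₁ j)⟫) (Matrix.of fun k j ↦ ⟪(c₁ k : V₁), f₃ (b₂ j)⟫)
      0 (Matrix.of fun k j ↦ ⟪(c₂ k : V₂), f₂ (b₂ j)⟫)).det| := by
  have hker₂ : (ker f₂)ᗮ = ⊤ := by
    rw [LinearMap.ker_eq_bot.mpr h₂, Submodule.bot_orthogonal_eq_top]
  refine detPerp_eq_abs_det _
    ((b₁.orthonormal.comp_linearIsometry (Submodule.subtypeₗᵢ _)).sumElim_toLp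
      (b₂.orthonormal.comp_linearIsometry (Submodule.subtypeₗᵢ _)))
    (Sum.forall.mpr ⟨fun i ↦ toLp_inl_mem_orthogonal_ker_blockMap f₁ f₂ f₃ h₂ (b₁ i).2,
      fun j ↦ toLp_inr_mem_orthogonal_ker_blockMap f₁ f₂ f₃ h₂ _⟩) ?_
    ((c₁.orthonormal.comp_linearIsometry (Submodule.subtypeₗᵢ _)).sumElim_toLp
      (c₂.orthonormal.comp_linearIsometry (Submodule.subtypeₗᵢ _))) _
    (blockMap_sumElim f₁ f₂ f₃
      (fun j ↦ (c₁.sum_inner_smul_coe (LinearMap.mem_range_self f₁ _)).symm)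
      (fun j ↦ (c₂.sum_inner_smul_coe (LinearMap.mem_range_self f₂ _)).symm)
      (fun j ↦ (c₁.sum_inner_smul_coe (LinearMap.range_eq_top.mpr h₁ ▸ Submodule.mem_top)).symm))
  rw [finrank_orthogonal_ker_blockMap f₁ f₂ f₃ h₂, Fintype.card_sum,
    ← finrank_eq_card_basis b₁.toBasis, ← finrank_eq_card_basis b₂.toBasis, hker₂, finrank_top]

end DetPerpBlockMap

/-- For linear maps `f₁ : U₁ → V₁`, `f₂ : U₂ → V₂`, `f₃ : U₂ → V₁` of finite-dimensional
real inner product spaces with `f₁` surjective and `f₂` injective, the block map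
`(f₁ f₃ ; 0 f₂) : U₁ ⊕ U₂ → V₁ ⊕ V₂` (orthogonal direct sums, i.e. `L²`-products),
sending `(u₁, u₂)` to `(f₁ u₁ + f₃ u₂, f₂ u₂)`, satisfies
`det⊥((f₁ f₃ ; 0 f₂)) = det⊥(f₁) · det⊥(f₂)`. -/
theorem detPerp_block {U₁ U₂ V₁ V₂ : Type*}
    [NormedAddCommGroup U₁] [InnerProductSpace ℝ U₁] [FiniteDimensional ℝ U₁]
    [NormedAddCommGroup U₂] [InnerProductSpace ℝ U₂] [FiniteDimensional ℝ U₂]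
    [NormedAddCommGroup V₁] [InnerProductSpace ℝ V₁] [FiniteDimensional ℝ V₁]
    [NormedAddCommGroup V₂] [InnerProductSpace ℝ V₂] [FiniteDimensional ℝ V₂]
    (f₁ : U₁ →ₗ[ℝ] V₁) (f₂ : U₂ →ₗ[ℝ] V₂) (f₃ : U₂ →ₗ[ℝ] V₁)
    (h₁ : Function.Surjective f₁) (h₂ : Function.Injective f₂)
    (F : WithLp 2 (U₁ × U₂) →ₗ[ℝ] WithLp 2 (V₁ × V₂))
    (hF : ∀ u : WithLp 2 (U₁ × U₂),
      (WithLp.linearEquiv 2 ℝ (V₁ × V₂)) (F u) =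
        (f₁ ((WithLp.linearEquiv 2 ℝ (U₁ × U₂)) u).1 + f₃ ((WithLp.linearEquiv 2 ℝ (U₁ × U₂)) u).2,
         f₂ ((WithLp.linearEquiv 2 ℝ (U₁ × U₂)) u).2)) :
    detPerp F = detPerp f₁ * detPerp f₂ := by
  obtain rfl : F = blockMap f₁ f₂ f₃ :=
    LinearMap.ext fun u ↦ (WithLp.linearEquiv 2 ℝ (V₁ × V₂)).injective (hF u)
  let b₁ := (stdOrthonormalBasis ℝ (ker f₁)ᗮ).reindex (finCongr f₁.finrank_orthogonal_ker)
  let b₂ := (stdOrthonormalBasis ℝ (ker f₂)ᗮ).reindex (finCongr f₂.finrank_orthogonal_ker)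
  let c₁ := stdOrthonormalBasis ℝ (range f₁)
  let c₂ := stdOrthonormalBasis ℝ (range f₂)
  rw [detPerp_blockMap f₁ f₂ f₃ h₁ h₂ b₁ c₁ b₂ c₂, detPerp_eq_abs_det_inner f₁ b₁ c₁,
    detPerp_eq_abs_det_inner f₂ b₂ c₂, Matrix.det_fromBlocks_zero₂₁, abs_mul]
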